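/- arXiv:2008.01379 — 2 statements merged into one kernel-verified Lean document; each statement's English description precedes it below -/
import Mathlib

section
/- Let S be a Γ-graded inverse semigroup. Then the following are equivalent: (1) S is locally strongly graded; (2) for all α ∈ Γ and u ∈ E(S)∖{0} there exists v ∈ E(S)_α∖{0} with v ≤ u; (3) for all α, β ∈ Γ and s ∈ S_{αβ}∖{0} there exists u ∈ E(S)∖{0} such that u ≤ s⁻¹s and su ∈ S_α S_β; (4) for all α, β ∈ Γ and s ∈ S_{αβ}∖{0} there exists u ∈ E(S)∖{0} such that u ≤ s s⁻¹ and us ∈ S_α S_β. -/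
open Pointwise

/-- A `Γ`-grading on a semigroup with zero `S`. -/
structure Grading (Γ : Type*) [Group Γ] (S : Type*) [SemigroupWithZero S] where
  deg : S → Γ
  deg_mul : ∀ s t : S, s * t ≠ 0 → deg (s * t) = deg s * deg t

namespace Grading

variable {Γ : Type*} [Group Γ] {S : Type*} [SemigroupWithZero S]

/-- The component `S_α = φ⁻¹(α) ∪ {0}` of a `Γ`-graded semigroup. -/
def comp (g : Grading Γ S) (α : Γ) : Set S := {s | s = 0 ∨ g.deg s = α}

end Grading

/-- The natural partial order on an inverse semigroup: `s ≤ t` iff `s = tu` for some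
idempotent `u`. -/
def NatLe (S : Type*) [SemigroupWithZero S] (s t : S) : Prop :=
  ∃ u : S, u * u = u ∧ s = t * u

/-!
Idempotents of an inverse semigroup commute, which makes `e s ≤ s` for every idempotent `e`
and lets `t = s w ≤ s` be rewritten as `s (s⁻¹ s w)` and as `(s w s⁻¹) s`; this turns (1) into
(3) and (4), and back. For (2), apply (1) to a nonzero idempotent `u ∈ S_{αα⁻¹}`: the resulting
`ab ≤ u` is idempotent and equals `r r⁻¹` for `r = a b b⁻¹ ∈ S_α`. Conversely, a nonzero
`r r⁻¹ ≤ s s⁻¹` with `r ∈ S_α` yields `r (r⁻¹ s) ≤ s` in `S_α S_β`.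
-/

structure IsInverseSemigroup {S : Type*} [Semigroup S] (inv : S → S) : Prop where
  mul_inv_mul : ∀ s, s * inv s * s = s
  inv_mul_inv : ∀ s, inv s * s * inv s = inv s
  eq_inv : ∀ s t, s * t * s = s → t * s * t = t → t = inv s

namespace IsInverseSemigroup

section Semigroup

variable {S : Type*} [Semigroup S] {inv : S → S}

theorem mul_inv_mul' (hS : IsInverseSemigroup inv) (s : S) : s * (inv s * s) = s := by
  rw [← mul_assoc, hS.mul_inv_mul]

theorem inv_mul_inv' (hS : IsInverseSemigroup inv) (s : S) : inv s * (s * inv s) = inv s := by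
  rw [← mul_assoc, hS.inv_mul_inv]

theorem mul_inv_mul_mul (hS : IsInverseSemigroup inv) (s y : S) :
    s * (inv s * (s * y)) = s * y := by
  rw [← mul_assoc, ← mul_assoc, hS.mul_inv_mul]

theorem inv_mul_inv_mul (hS : IsInverseSemigroup inv) (s y : S) :
    inv s * (s * (inv s * y)) = inv s * y := by
  rw [← mul_assoc, ← mul_assoc, hS.inv_mul_inv]

theorem isIdempotentElem_mul_inv (hS : IsInverseSemigroup inv) (s : S) :
    IsIdempotentElem (s * inv s) := by
  rw [IsIdempotentElem, mul_assoc, ← mul_assoc (inv s), hS.inv_mul_inv]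

theorem isIdempotentElem_inv_mul (hS : IsInverseSemigroup inv) (s : S) :
    IsIdempotentElem (inv s * s) := by
  rw [IsIdempotentElem, mul_assoc, ← mul_assoc s, hS.mul_inv_mul]

theorem inv_inv (hS : IsInverseSemigroup inv) (s : S) : inv (inv s) = s :=
  (hS.eq_inv (inv s) s (hS.inv_mul_inv s) (hS.mul_inv_mul s)).symm

theorem inv_eq_self (hS : IsInverseSemigroup inv) {e : S} (he : IsIdempotentElem e) :
    inv e = e :=
  (hS.eq_inv e e (by rw [he.eq, he.eq]) (by rw [he.eq, he.eq])).symm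

/-- `f x e` is an inverse of `e f` for `x = (e f)⁻¹`, so `x = f x e` is idempotent, and then
so is its inverse `e f`. -/
theorem isIdempotentElem_mul (hS : IsInverseSemigroup inv) {e f : S} (he : IsIdempotentElem e)
    (hf : IsIdempotentElem f) : IsIdempotentElem (e * f) := by
  set x := inv (e * f)
  have hx : x * (e * f) * x = x := hS.inv_mul_inv (e * f)
  have hx' (y : S) : x * (e * (f * (x * y))) = x * y := by
    simpa only [mul_assoc] using congrArg (· * y) hx
  have hfxe : f * x * e = x := by
    refine hS.eq_inv (e * f) (f * x * e) ?_ ?_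
    · calc e * f * (f * x * e) * (e * f) = e * f * x * (e * f) := by
            simp only [mul_assoc, he.mul_self_mul, hf.mul_self_mul]
        _ = e * f := hS.mul_inv_mul (e * f)
    · simp only [mul_assoc, he.mul_self_mul, hf.mul_self_mul, hx']
  have hxx : IsIdempotentElem x := by
    rw [IsIdempotentElem, ← hfxe]
    simp only [mul_assoc, hx']
  have hef : e * f = x := by
    rw [hS.eq_inv x (e * f) hx (hS.mul_inv_mul (e * f)), hS.inv_eq_self hxx]
  rw [hef]
  exact hxx

/-- `e f` and `f e` are mutually inverse, and the idempotent `e f` is its own inverse. -/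
theorem commute (hS : IsInverseSemigroup inv) {e f : S} (he : IsIdempotentElem e)
    (hf : IsIdempotentElem f) : Commute e f := by
  have hef := hS.isIdempotentElem_mul he hf
  have hfe := hS.isIdempotentElem_mul hf he
  have h := hS.eq_inv (e * f) (f * e)
    (by simpa only [mul_assoc, he.mul_self_mul, hf.mul_self_mul] using hef.eq)
    (by simpa only [mul_assoc, he.mul_self_mul, hf.mul_self_mul] using hfe.eq)
  exact (hS.inv_eq_self hef).symm.trans h.symm

theorem inv_mul (hS : IsInverseSemigroup inv) (s t : S) : inv (s * t) = inv t * inv s := by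
  have hcomm : t * inv t * (inv s * s) = inv s * s * (t * inv t) :=
    hS.commute (hS.isIdempotentElem_mul_inv t) (hS.isIdempotentElem_inv_mul s)
  refine (hS.eq_inv (s * t) (inv t * inv s) ?_ ?_).symm
  · calc s * t * (inv t * inv s) * (s * t) = s * (t * inv t * (inv s * s) * t) := by
          simp only [mul_assoc]
      _ = s * t := by rw [hcomm]; simp only [mul_assoc, hS.mul_inv_mul_mul, hS.mul_inv_mul']
  · calc inv t * inv s * (s * t) * (inv t * inv s)
        = inv t * (inv s * s * (t * inv t) * inv s) := by simp only [mul_assoc]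
      _ = inv t * inv s := by rw [← hcomm]; simp only [mul_assoc, hS.inv_mul_inv_mul, hS.inv_mul_inv']

theorem isIdempotentElem_mul_mul_inv (hS : IsInverseSemigroup inv) {e : S}
    (he : IsIdempotentElem e) (s : S) : IsIdempotentElem (s * e * inv s) := by
  have hcomm : e * (inv s * s) = inv s * s * e := hS.commute he (hS.isIdempotentElem_inv_mul s)
  calc s * e * inv s * (s * e * inv s) = s * (e * (inv s * s) * e) * inv s := by
        simp only [mul_assoc]
    _ = s * e * inv s := by
        rw [hcomm, mul_assoc _ e e, he.eq]
        simp only [mul_assoc, hS.mul_inv_mul_mul]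

end Semigroup

section SemigroupWithZero

variable {S : Type*} [SemigroupWithZero S] {inv : S → S}

theorem mul_inv_ne_zero (hS : IsInverseSemigroup inv) {s : S} (hs : s ≠ 0) : s * inv s ≠ 0 :=
  fun h => hs (by rw [← hS.mul_inv_mul s, h, zero_mul])

theorem natLe_mul_left (hS : IsInverseSemigroup inv) {e : S} (he : IsIdempotentElem e) (s : S) :
    NatLe S (e * s) s := by
  have hconj : IsIdempotentElem (inv s * e * s) := by
    simpa only [hS.inv_inv] using hS.isIdempotentElem_mul_mul_inv he (inv s)
  refine ⟨inv s * e * s, hconj, ?_⟩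
  calc e * s = e * (s * inv s) * s := by rw [mul_assoc e, hS.mul_inv_mul]
    _ = s * (inv s * e * s) := by
      rw [hS.commute he (hS.isIdempotentElem_mul_inv s)]
      simp only [mul_assoc]

end SemigroupWithZero

end IsInverseSemigroup

section NatLe

variable {S : Type*} [SemigroupWithZero S]

theorem NatLe.idempotent_mul_eq {v f : S} (hf : IsIdempotentElem f) (h : NatLe S v f) :
    f * v = v := by
  obtain ⟨w, -, rfl⟩ := h
  rw [← mul_assoc, hf.eq]

theorem NatLe.mul_idempotent_eq {inv : S → S} (hS : IsInverseSemigroup inv) {v f : S}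
    (hf : IsIdempotentElem f) (h : NatLe S v f) : v * f = v := by
  obtain ⟨w, hw, rfl⟩ := h
  rw [mul_assoc, hS.commute hw hf, ← mul_assoc, hf.eq]

end NatLe

namespace Grading

variable {Γ : Type*} [Group Γ] {S : Type*} [SemigroupWithZero S] (g : Grading Γ S)

theorem mul_mem_comp {α β : Γ} {a b : S} (ha : a ∈ g.comp α) (hb : b ∈ g.comp β) :
    a * b ∈ g.comp (α * β) := by
  by_cases hab : a * b = 0
  · exact Or.inl hab
  · have ha0 : a ≠ 0 := by rintro rfl; exact hab (zero_mul b)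
    have hb0 : b ≠ 0 := by rintro rfl; exact hab (mul_zero a)
    right
    rw [g.deg_mul a b hab, ha.resolve_left ha0, hb.resolve_left hb0]

theorem mem_comp_one {e : S} (he : IsIdempotentElem e) : e ∈ g.comp 1 := by
  by_cases he0 : e = 0
  · exact Or.inl he0
  · have h := g.deg_mul e e (by rwa [he.eq])
    rw [he.eq] at h
    exact Or.inr (left_eq_mul.mp h)

theorem inv_mem_comp {inv : S → S} (hS : IsInverseSemigroup inv) {α : Γ} {s : S}
    (hs : s ∈ g.comp α) : inv s ∈ g.comp α⁻¹ := by
  by_cases hs0 : s = 0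
  · left
    rw [← hS.inv_mul_inv s, hs0, mul_zero, zero_mul]
  · have hsi := hS.mul_inv_ne_zero hs0
    have h := (g.mem_comp_one (hS.isIdempotentElem_mul_inv s)).resolve_left hsi
    rw [g.deg_mul s (inv s) hsi, hs.resolve_left hs0] at h
    exact Or.inr (eq_inv_of_mul_eq_one_right h)

def IsLocallyStronglyGraded : Prop :=
  ∀ α β : Γ, ∀ s ∈ g.comp (α * β), s ≠ 0 → ∃ t ∈ g.comp α * g.comp β, t ≠ 0 ∧ NatLe S t s

variable {g} {inv : S → S}

theorem IsLocallyStronglyGraded.exists_mul_inv_natLe (hS : IsInverseSemigroup inv)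
    (h : g.IsLocallyStronglyGraded) (α : Γ) (u : S) (hu : IsIdempotentElem u) (hu0 : u ≠ 0) :
    ∃ v : S, v ≠ 0 ∧ (∃ s ∈ g.comp α, v = s * inv s) ∧ NatLe S v u := by
  have hu' : u ∈ g.comp (α * α⁻¹) := by rw [mul_inv_cancel]; exact g.mem_comp_one hu
  obtain ⟨t, ht, ht0, w, hw, htw⟩ := h α α⁻¹ u hu' hu0
  obtain ⟨a, ha, b, hb, rfl⟩ := Set.mem_mul.mp ht
  have hab_idem : IsIdempotentElem (a * b) := htw ▸ hS.isIdempotentElem_mul hu hw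
  have hbb := hS.isIdempotentElem_mul_inv b
  refine ⟨a * b, ht0, ⟨a * (b * inv b), by simpa using g.mul_mem_comp ha (g.mem_comp_one hbb), ?_⟩,
    w, hw, htw⟩
  calc a * b = a * b * inv (a * b) := by rw [hS.inv_eq_self hab_idem, hab_idem.eq]
    _ = a * (b * inv b) * inv (a * (b * inv b)) := by
      rw [hS.inv_mul a, hS.inv_mul a, hS.inv_eq_self hbb]
      simp only [mul_assoc, hS.inv_mul_inv_mul]

theorem isLocallyStronglyGraded_of_exists_mul_inv_natLe (hS : IsInverseSemigroup inv)
    (h : ∀ (α : Γ) (u : S), IsIdempotentElem u → u ≠ 0 →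
      ∃ v : S, v ≠ 0 ∧ (∃ s ∈ g.comp α, v = s * inv s) ∧ NatLe S v u) :
    g.IsLocallyStronglyGraded := by
  intro α β s hs hs0
  obtain ⟨_, hv0, ⟨r, hr, rfl⟩, hv⟩ :=
    h α (s * inv s) (hS.isIdempotentElem_mul_inv s) (hS.mul_inv_ne_zero hs0)
  refine ⟨r * inv r * s, ?_, ?_, hS.natLe_mul_left (hS.isIdempotentElem_mul_inv r) s⟩
  · rw [mul_assoc]
    exact Set.mul_mem_mul hr (by simpa using g.mul_mem_comp (g.inv_mem_comp hS hr) hs)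
  · intro h0
    apply hv0
    rw [← hv.mul_idempotent_eq hS (hS.isIdempotentElem_mul_inv s), ← mul_assoc, h0, zero_mul]

theorem IsLocallyStronglyGraded.exists_natLe_inv_mul (hS : IsInverseSemigroup inv)
    (h : g.IsLocallyStronglyGraded) (α β : Γ) (s : S) (hs : s ∈ g.comp (α * β)) (hs0 : s ≠ 0) :
    ∃ u : S, IsIdempotentElem u ∧ u ≠ 0 ∧ NatLe S u (inv s * s) ∧
      s * u ∈ g.comp α * g.comp β := by
  obtain ⟨_, ht, ht0, w, hw, rfl⟩ := h α β s hs hs0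
  have hsu : s * (inv s * s * w) = s * w := by rw [← mul_assoc, ← mul_assoc, hS.mul_inv_mul]
  refine ⟨inv s * s * w, hS.isIdempotentElem_mul (hS.isIdempotentElem_inv_mul s) hw, ?_,
    ⟨w, hw, rfl⟩, hsu ▸ ht⟩
  intro h0
  rw [h0, mul_zero] at hsu
  exact ht0 hsu.symm

theorem isLocallyStronglyGraded_of_exists_natLe_inv_mul (hS : IsInverseSemigroup inv)
    (h : ∀ α β : Γ, ∀ s ∈ g.comp (α * β), s ≠ 0 → ∃ u : S, IsIdempotentElem u ∧ u ≠ 0 ∧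
      NatLe S u (inv s * s) ∧ s * u ∈ g.comp α * g.comp β) :
    g.IsLocallyStronglyGraded := by
  intro α β s hs hs0
  obtain ⟨u, hu, hu0, hle, hsu⟩ := h α β s hs hs0
  refine ⟨s * u, hsu, fun h0 => hu0 ?_, u, hu, rfl⟩
  rw [← hle.idempotent_mul_eq (hS.isIdempotentElem_inv_mul s), mul_assoc, h0, mul_zero]

theorem IsLocallyStronglyGraded.exists_natLe_mul_inv (hS : IsInverseSemigroup inv)
    (h : g.IsLocallyStronglyGraded) (α β : Γ) (s : S) (hs : s ∈ g.comp (α * β)) (hs0 : s ≠ 0) :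
    ∃ u : S, IsIdempotentElem u ∧ u ≠ 0 ∧ NatLe S u (s * inv s) ∧
      u * s ∈ g.comp α * g.comp β := by
  obtain ⟨_, ht, ht0, w, hw, rfl⟩ := h α β s hs hs0
  have hu := hS.isIdempotentElem_mul_mul_inv hw s
  have hus : s * w * inv s * s = s * w := by
    rw [mul_assoc, mul_assoc, (hS.commute hw (hS.isIdempotentElem_inv_mul s)).eq,
      ← mul_assoc, ← mul_assoc, hS.mul_inv_mul]
  refine ⟨s * w * inv s, hu, ?_, ⟨s * w * inv s, hu, ?_⟩, by rwa [hus]⟩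
  · intro h0
    rw [h0, zero_mul] at hus
    exact ht0 hus.symm
  · simp only [mul_assoc, hS.mul_inv_mul_mul]

theorem isLocallyStronglyGraded_of_exists_natLe_mul_inv (hS : IsInverseSemigroup inv)
    (h : ∀ α β : Γ, ∀ s ∈ g.comp (α * β), s ≠ 0 → ∃ u : S, IsIdempotentElem u ∧ u ≠ 0 ∧
      NatLe S u (s * inv s) ∧ u * s ∈ g.comp α * g.comp β) :
    g.IsLocallyStronglyGraded := by
  intro α β s hs hs0
  obtain ⟨u, hu, hu0, hle, hus⟩ := h α β s hs hs0
  refine ⟨u * s, hus, fun h0 => hu0 ?_, hS.natLe_mul_left hu s⟩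
  rw [← hle.mul_idempotent_eq hS (hS.isIdempotentElem_mul_inv s), ← mul_assoc, h0, zero_mul]

end Grading

/-- Characterisations of locally strongly graded inverse semigroups
(Proposition `sussa`).  For a `Γ`-graded inverse semigroup `S` (with inverse map `inv`)
the following are equivalent:
(1) `S` is locally strongly graded: for all `α, β` and nonzero `s ∈ S_{αβ}` there is a
    nonzero `t ∈ S_α S_β` with `t ≤ s`;
(2) for all `α` and all nonzero idempotents `u`, there is a nonzero
    `v ∈ E(S)_α = {s s⁻¹ | s ∈ S_α}` with `v ≤ u`;
(3) for all `α, β` and nonzero `s ∈ S_{αβ}`, there is a nonzero idempotent `u` with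
    `u ≤ s⁻¹ s` and `s u ∈ S_α S_β`;
(4) for all `α, β` and nonzero `s ∈ S_{αβ}`, there is a nonzero idempotent `u` with
    `u ≤ s s⁻¹` and `u s ∈ S_α S_β`. -/
theorem locally_strongly_graded_tfae {Γ : Type u} [Group Γ] {S : Type v}
    [SemigroupWithZero S] (g : Grading Γ S) (inv : S → S)
    (hinv : ∀ s : S, s * inv s * s = s ∧ inv s * s * inv s = inv s)
    (huniq : ∀ s t : S, s * t * s = s → t * s * t = t → t = inv s) :
    ((∀ α β : Γ, ∀ s ∈ g.comp (α * β), s ≠ 0 →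
        ∃ t ∈ g.comp α * g.comp β, t ≠ 0 ∧ NatLe S t s) ↔
      (∀ (α : Γ) (u : S), u * u = u → u ≠ 0 →
        ∃ v : S, v ≠ 0 ∧ (∃ s ∈ g.comp α, v = s * inv s) ∧ NatLe S v u)) ∧
    ((∀ α β : Γ, ∀ s ∈ g.comp (α * β), s ≠ 0 →
        ∃ t ∈ g.comp α * g.comp β, t ≠ 0 ∧ NatLe S t s) ↔
      (∀ α β : Γ, ∀ s ∈ g.comp (α * β), s ≠ 0 →
        ∃ u : S, u * u = u ∧ u ≠ 0 ∧ NatLe S u (inv s * s) ∧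
          s * u ∈ g.comp α * g.comp β)) ∧
    ((∀ α β : Γ, ∀ s ∈ g.comp (α * β), s ≠ 0 →
        ∃ t ∈ g.comp α * g.comp β, t ≠ 0 ∧ NatLe S t s) ↔
      (∀ α β : Γ, ∀ s ∈ g.comp (α * β), s ≠ 0 →
        ∃ u : S, u * u = u ∧ u ≠ 0 ∧ NatLe S u (s * inv s) ∧
          u * s ∈ g.comp α * g.comp β)) := by
  have hS : IsInverseSemigroup inv := ⟨fun s => (hinv s).1, fun s => (hinv s).2, huniq⟩
  exact ⟨⟨fun h => Grading.IsLocallyStronglyGraded.exists_mul_inv_natLe (g := g) hS h,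
      Grading.isLocallyStronglyGraded_of_exists_mul_inv_natLe hS⟩,
    ⟨fun h => Grading.IsLocallyStronglyGraded.exists_natLe_inv_mul (g := g) hS h,
      Grading.isLocallyStronglyGraded_of_exists_natLe_inv_mul hS⟩,
    ⟨fun h => Grading.IsLocallyStronglyGraded.exists_natLe_mul_inv (g := g) hS h,
      Grading.isLocallyStronglyGraded_of_exists_natLe_mul_inv hS⟩⟩
end

section
/- Let S be a Γ-graded semigroup with local units and S_Γ the corresponding stable graded Rees matrix semigroup. Then: (1) E(S_Γ) = {e_{αα}(u) | u ∈ E(S), α ∈ Γ}; (2) S_Γ has local units; (3) S_Γ is strongly Γ-graded; (4) the map φ : S#Γ → (S_Γ)_ε defined by φ(s P_α) = e_{deg(s)α, α}(s) for nonzero sP_α and φ(0) = 0 is a semigroup isomorphism; (5) S is an inverse semigroup if and only if S_Γ is an inverse semigroup. -/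
/-- `S` has local units. -/
def HasLocalUnits (S : Type*) [SemigroupWithZero S] : Prop :=
  ∀ s : S, ∃ u v : S, u * u = u ∧ v * v = v ∧ u * s = s ∧ s * v = s

/-- The underlying set of the smash product `S#Γ`. -/
abbrev Smash (Γ : Type u) (S : Type v) [SemigroupWithZero S] : Type max u v :=
  Option ({ s : S // s ≠ 0 } × Γ)

open Classical in
/-- Multiplication in the smash product `S#Γ`. -/
noncomputable def smashMul {Γ : Type u} [Group Γ] {S : Type v} [SemigroupWithZero S]
    (g : Grading Γ S) (a b : Smash Γ S) : Smash Γ S :=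
  a.bind fun p => b.bind fun q =>
    if h : p.1.1 * q.1.1 ≠ 0 ∧ g.deg q.1.1 = p.2 * q.2⁻¹ then
      some (⟨p.1.1 * q.1.1, h.1⟩, q.2)
    else none

/-- The underlying set of the stable graded Rees matrix semigroup `S_Γ`: elements
`e_{αβ}(s)` with `s ≠ 0` (all `e_{αβ}(0)` are identified with the zero, `none`). -/
abbrev ReesStable (Γ : Type u) (S : Type v) [SemigroupWithZero S] : Type max u v :=
  Option (Γ × { s : S // s ≠ 0 } × Γ)

open Classical in
/-- Multiplication in `S_Γ`: `e_{αβ}(s) e_{δγ}(t) = e_{αγ}(st)` if `β = δ`, else `0`. -/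
noncomputable def reesMul {Γ : Type u} {S : Type v} [SemigroupWithZero S]
    (a b : ReesStable Γ S) : ReesStable Γ S :=
  a.bind fun p => b.bind fun q =>
    if h : p.2.2 = q.1 ∧ p.2.1.1 * q.2.1.1 ≠ 0 then
      some (p.1, ⟨p.2.1.1 * q.2.1.1, h.2⟩, q.2.2)
    else none

/-- The `Γ`-grading of `S_Γ`: `deg (e_{αβ}(s)) = α⁻¹ (deg s) β`. -/
def reesDeg {Γ : Type u} [Group Γ] {S : Type v} [SemigroupWithZero S]
    (g : Grading Γ S) : ReesStable Γ S → Γ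
  | some p => p.1⁻¹ * g.deg p.2.1.1 * p.2.2
  | none => 1

/-- The component `(S_Γ)_γ`. -/
def reesComp {Γ : Type u} [Group Γ] {S : Type v} [SemigroupWithZero S]
    (g : Grading Γ S) (γ : Γ) : Set (ReesStable Γ S) :=
  {a | a = none ∨ reesDeg g a = γ}

/-- The map `φ : S#Γ → (S_Γ)_ε`, `s P_α ↦ e_{deg(s)α, α}(s)`, `0 ↦ 0`. -/
def smashToRees {Γ : Type u} [Group Γ] {S : Type v} [SemigroupWithZero S]
    (g : Grading Γ S) : Smash Γ S → ReesStable Γ S :=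
  Option.map fun p => (g.deg p.1.1 * p.2, p.1, p.2)

namespace Grading

variable {Γ : Type*} [Group Γ] {S : Type*} [SemigroupWithZero S] (g : Grading Γ S)

theorem zero_mem_comp (α : Γ) : (0 : S) ∈ g.comp α := Or.inl rfl

theorem mem_comp_iff_of_ne_zero {s : S} (hs : s ≠ 0) {α : Γ} : s ∈ g.comp α ↔ g.deg s = α := by
  simp [comp, hs]

theorem mul_mem_comp_s9 {s t : S} {α β : Γ} (hs : s ∈ g.comp α) (ht : t ∈ g.comp β) :
    s * t ∈ g.comp (α * β) := by
  by_cases hst : s * t = 0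
  · exact Or.inl hst
  · rcases hs with rfl | hs
    · simp at hst
    rcases ht with rfl | ht
    · simp at hst
    exact Or.inr (by rw [g.deg_mul s t hst, hs, ht])

theorem deg_eq_one_of_mul_eq_self {s v : S} (hs : s ≠ 0) (hsv : s * v = s) : g.deg v = 1 := by
  have h := g.deg_mul s v (hsv.symm ▸ hs)
  rw [hsv] at h
  exact left_eq_mul.mp h

theorem exists_right_unit_mem_comp_one (hlu : HasLocalUnits S) (s : S) :
    ∃ v ∈ g.comp 1, s * v = s := by
  by_cases hs : s = 0
  · exact ⟨0, g.zero_mem_comp 1, by rw [hs, mul_zero]⟩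
  · obtain ⟨-, v, -, -, -, hsv⟩ := hlu s
    exact ⟨v, Or.inr (g.deg_eq_one_of_mul_eq_self hs hsv), hsv⟩

end Grading

section MatrixUnits

variable {Γ : Type u} {S : Type v} [SemigroupWithZero S]

open Classical in
/-- The matrix unit `e_{αβ}(s)`, equal to the zero `none` when `s = 0`. -/
noncomputable def rees (α : Γ) (s : S) (β : Γ) : ReesStable Γ S :=
  if hs : s = 0 then none else some (α, ⟨s, hs⟩, β)

@[simp] theorem rees_zero (α β : Γ) : rees α (0 : S) β = none := dif_pos rfl

theorem rees_of_ne_zero {s : S} (hs : s ≠ 0) (α β : Γ) : rees α s β = some (α, ⟨s, hs⟩, β) :=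
  dif_neg hs

@[simp] theorem rees_eq_none_iff {α β : Γ} {s : S} : rees α s β = none ↔ s = 0 := by
  by_cases hs : s = 0 <;> simp [rees, hs]

theorem rees_injective (α β : Γ) : Function.Injective (fun s : S => rees α s β) := by
  intro s t hst
  by_cases hs : s = 0 <;> by_cases ht : t = 0
  · rw [hs, ht]
  · simp [hs, rees_of_ne_zero ht] at hst
  · simp [ht, rees_of_ne_zero hs] at hst
  · simpa [rees_of_ne_zero hs, rees_of_ne_zero ht] using hst

@[simp] theorem rees_inj {α β : Γ} {s t : S} : rees α s β = rees α t β ↔ s = t :=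
  (rees_injective α β).eq_iff

theorem exists_eq_rees [Nonempty Γ] (a : ReesStable Γ S) : ∃ α s β, a = rees α s β := by
  rcases a with _ | ⟨α, s, β⟩
  · exact ⟨Classical.arbitrary Γ, 0, Classical.arbitrary Γ, (rees_zero _ _).symm⟩
  · exact ⟨α, s, β, (rees_of_ne_zero s.2 α β).symm⟩

open Classical in
theorem reesMul_rees_rees (α β δ γ : Γ) (s t : S) :
    reesMul (rees α s β) (rees δ t γ) = if β = δ then rees α (s * t) γ else none := by
  by_cases hs : s = 0
  · simp [hs, reesMul]
  by_cases ht : t = 0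
  · simp [ht, rees_of_ne_zero hs, reesMul]
  simp only [rees_of_ne_zero hs, rees_of_ne_zero ht, reesMul, Option.bind_some]
  by_cases hst : s * t = 0 <;> by_cases hβ : β = δ <;> simp [hst, hβ, rees]

@[simp] theorem reesMul_none_left (b : ReesStable Γ S) : reesMul none b = none := rfl

@[simp] theorem reesMul_rees_rees_self (α β γ : Γ) (s t : S) :
    reesMul (rees α s β) (rees β t γ) = rees α (s * t) γ := by
  simp [reesMul_rees_rees]

theorem reesMul_self_eq_self_iff [Nonempty Γ] (a : ReesStable Γ S) :
    reesMul a a = a ↔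
      a = none ∨ ∃ (α : Γ) (u : S) (hu : u ≠ 0), u * u = u ∧ a = some (α, ⟨u, hu⟩, α) := by
  obtain ⟨α, s, β, rfl⟩ := exists_eq_rees a
  by_cases hs : s = 0
  · simp [hs]
  have ha : rees α s β ≠ none := by simpa using hs
  rw [reesMul_rees_rees, or_iff_right ha]
  constructor
  · intro h
    split_ifs at h with hβ
    · subst hβ
      exact ⟨β, s, hs, rees_inj.mp h, rees_of_ne_zero hs β β⟩
    · exact absurd h.symm ha
  · rintro ⟨γ, u, hu, huu, h⟩
    simp only [rees_of_ne_zero hs, Option.some.injEq, Prod.mk.injEq, Subtype.mk.injEq] at h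
    obtain ⟨rfl, rfl, rfl⟩ := h
    simp [huu]

theorem exists_reesMul_local_units [Nonempty Γ] (hlu : HasLocalUnits S) (a : ReesStable Γ S) :
    ∃ u v : ReesStable Γ S,
      reesMul u u = u ∧ reesMul v v = v ∧ reesMul u a = a ∧ reesMul a v = a := by
  obtain ⟨α, s, β, rfl⟩ := exists_eq_rees a
  obtain ⟨u, v, huu, hvv, hus, hsv⟩ := hlu s
  exact ⟨rees α u α, rees β v β, by simp [huu, hvv, hus, hsv]⟩

def IsInversePair {M : Type*} (mul : M → M → M) (a b : M) : Prop :=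
  mul (mul a b) a = a ∧ mul (mul b a) b = b

theorem isInversePair_rees_iff (α β : Γ) (s : S) (b : ReesStable Γ S) :
    IsInversePair reesMul (rees α s β) b ↔ ∃ t, b = rees β t α ∧ IsInversePair (· * ·) s t := by
  constructor
  · intro hb
    have : Nonempty Γ := ⟨α⟩
    obtain ⟨δ, t, γ, rfl⟩ := exists_eq_rees b
    by_cases hβ : β = δ <;> by_cases hγ : γ = α
    · subst hβ hγ
      simp only [IsInversePair, reesMul_rees_rees_self, rees_inj] at hb
      exact ⟨t, rfl, hb⟩
    all_goals
      obtain ⟨rfl, rfl⟩ : s = 0 ∧ t = 0 := by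
        simpa [IsInversePair, reesMul_rees_rees, hβ, hγ, eq_comm] using hb
      exact ⟨0, by simp, by simp [IsInversePair]⟩
  · rintro ⟨t, rfl, hst, hts⟩
    simp [IsInversePair, hst, hts]

theorem forall_existsUnique_isInversePair_iff_reesMul [Nonempty Γ] :
    (∀ s : S, ∃! t, IsInversePair (· * ·) s t) ↔
      ∀ a : ReesStable Γ S, ∃! b, IsInversePair reesMul a b := by
  obtain ⟨ε⟩ := ‹Nonempty Γ›
  constructor
  · intro hS a
    obtain ⟨α, s, β, rfl⟩ := exists_eq_rees a
    obtain ⟨t, hst, ht_unique⟩ := hS s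
    refine ⟨rees β t α, (isInversePair_rees_iff α β s _).mpr ⟨t, rfl, hst⟩, fun b hb => ?_⟩
    obtain ⟨t', rfl, hst'⟩ := (isInversePair_rees_iff α β s b).mp hb
    rw [ht_unique t' hst']
  · intro hR s
    obtain ⟨b, hb, hb_unique⟩ := hR (rees ε s ε)
    obtain ⟨t, rfl, hst⟩ := (isInversePair_rees_iff ε ε s b).mp hb
    refine ⟨t, hst, fun t' hst' => ?_⟩
    exact rees_inj.mp (hb_unique _ ((isInversePair_rees_iff ε ε s _).mpr ⟨t', rfl, hst'⟩))

end MatrixUnits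

section Graded

variable {Γ : Type u} [Group Γ] {S : Type v} [SemigroupWithZero S] (g : Grading Γ S)

theorem rees_mem_reesComp_iff {α β γ : Γ} {s : S} :
    rees α s β ∈ reesComp g γ ↔ s ∈ g.comp (α * γ * β⁻¹) := by
  by_cases hs : s = 0
  · simp [hs, reesComp, g.zero_mem_comp]
  rw [g.mem_comp_iff_of_ne_zero hs, rees_of_ne_zero hs]
  simp only [reesComp, Set.mem_ofPred_eq, reesDeg, reduceCtorEq, false_or]
  constructor
  · rintro rfl
    group
  · intro h
    rw [h]
    group

theorem reesMul_mem_reesComp {γ δ : Γ} {a b : ReesStable Γ S}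
    (ha : a ∈ reesComp g γ) (hb : b ∈ reesComp g δ) : reesMul a b ∈ reesComp g (γ * δ) := by
  obtain ⟨α, s, β, rfl⟩ := exists_eq_rees a
  obtain ⟨β', t, α', rfl⟩ := exists_eq_rees b
  rw [rees_mem_reesComp_iff] at ha hb
  rw [reesMul_rees_rees]
  split_ifs with hβ
  · subst hβ
    rw [rees_mem_reesComp_iff]
    convert g.mul_mem_comp_s9 ha hb using 2
    group
  · exact Or.inl rfl

theorem mem_image2_reesMul_of_mem_reesComp (hlu : HasLocalUnits S) {γ δ : Γ}
    {c : ReesStable Γ S} (hc : c ∈ reesComp g (γ * δ)) :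
    c ∈ Set.image2 reesMul (reesComp g γ) (reesComp g δ) := by
  obtain ⟨α, w, β, rfl⟩ := exists_eq_rees c
  rw [rees_mem_reesComp_iff] at hc
  obtain ⟨v, hv, hwv⟩ := g.exists_right_unit_mem_comp_one hlu w
  refine ⟨rees α w (β * δ⁻¹), ?_, rees (β * δ⁻¹) v β, ?_, by simp [hwv]⟩
  · rw [rees_mem_reesComp_iff]
    convert hc using 2
    group
  · rw [rees_mem_reesComp_iff]
    convert hv using 2
    group

theorem image2_reesMul_reesComp (hlu : HasLocalUnits S) (γ δ : Γ) :
    Set.image2 reesMul (reesComp g γ) (reesComp g δ) = reesComp g (γ * δ) := by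
  apply Set.Subset.antisymm
  · rintro _ ⟨a, ha, b, hb, rfl⟩
    exact reesMul_mem_reesComp g ha hb
  · exact fun c hc => mem_image2_reesMul_of_mem_reesComp g hlu hc

@[simp] theorem smashToRees_none : smashToRees g none = none := rfl

theorem smashToRees_some (s : {x : S // x ≠ 0}) (α : Γ) :
    smashToRees g (some (s, α)) = rees (g.deg s * α) (s : S) α :=
  (rees_of_ne_zero s.2 _ _).symm

theorem smashToRees_injective : Function.Injective (smashToRees g) :=
  Option.map_injective fun _ _ h => by
    simp only [Prod.mk.injEq] at h
    exact Prod.ext h.2.1 h.2.2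

theorem range_smashToRees : Set.range (smashToRees g) = reesComp g 1 := by
  ext c
  constructor
  · rintro ⟨a, rfl⟩
    rcases a with _ | ⟨s, α⟩
    · exact Or.inl rfl
    · rw [smashToRees_some, rees_mem_reesComp_iff, g.mem_comp_iff_of_ne_zero s.2]
      group
  · intro hc
    obtain ⟨α, s, β, rfl⟩ := exists_eq_rees c
    by_cases hs : s = 0
    · exact ⟨none, by simp [hs]⟩
    rw [rees_mem_reesComp_iff, g.mem_comp_iff_of_ne_zero hs] at hc
    refine ⟨some (⟨s, hs⟩, β), ?_⟩
    rw [smashToRees_some, hc]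
    group

theorem smashToRees_smashMul (a b : Smash Γ S) :
    smashToRees g (smashMul g a b) = reesMul (smashToRees g a) (smashToRees g b) := by
  rcases a with _ | ⟨s, α⟩
  · rfl
  rcases b with _ | ⟨t, β⟩
  · rfl
  simp only [smashMul, Option.bind_some, smashToRees_some, reesMul_rees_rees]
  by_cases hst : (s : S) * t = 0
  · simp [hst]
  by_cases hα : α = g.deg t * β
  · have hdeg : g.deg ((s : S) * t) * β = g.deg s * α := by
      rw [g.deg_mul _ _ hst, hα, mul_assoc]
    rw [dif_pos ⟨hst, by rw [hα]; group⟩, if_pos hα, smashToRees_some, hdeg]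
  · rw [dif_neg fun h => hα (by rw [h.2]; group), if_neg hα]
    rfl

end Graded

/-- Proposition `hgyfhyfhf` on the stable graded Rees matrix semigroup `S_Γ` of a
`Γ`-graded semigroup `S` with local units:
(1) `E(S_Γ) = {e_{αα}(u) | u ∈ E(S), α ∈ Γ}` (with `e_{αα}(0) = 0`);
(2) `S_Γ` has local units;
(3) `S_Γ` is strongly `Γ`-graded;
(4) `φ : s P_α ↦ e_{deg(s)α,α}(s)` is a semigroup isomorphism `S#Γ ≅ (S_Γ)_ε`;
(5) `S` is an inverse semigroup iff `S_Γ` is an inverse semigroup. -/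
theorem stable_rees_matrix_props {Γ : Type u} [Group Γ] {S : Type v}
    [SemigroupWithZero S] (g : Grading Γ S) (hlu : HasLocalUnits S) :
    (∀ a : ReesStable Γ S, reesMul a a = a ↔
      (a = none ∨ ∃ (α : Γ) (u : S) (hu : u ≠ 0), u * u = u ∧ a = some (α, ⟨u, hu⟩, α))) ∧
    (∀ a : ReesStable Γ S, ∃ u v : ReesStable Γ S,
      reesMul u u = u ∧ reesMul v v = v ∧ reesMul u a = a ∧ reesMul a v = a) ∧
    (∀ γ δ : Γ, Set.image2 (reesMul (Γ := Γ) (S := S))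
        (reesComp g γ) (reesComp g δ) = reesComp g (γ * δ)) ∧
    (Function.Injective (smashToRees g) ∧
     Set.range (smashToRees g) = reesComp g 1 ∧
     (∀ a b : Smash Γ S,
        smashToRees g (smashMul g a b) = reesMul (smashToRees g a) (smashToRees g b))) ∧
    ((∀ s : S, ∃! t : S, s * t * s = s ∧ t * s * t = t) ↔
      (∀ a : ReesStable Γ S, ∃! b : ReesStable Γ S,
        reesMul (reesMul a b) a = a ∧ reesMul (reesMul b a) b = b)) := by
  exact ⟨reesMul_self_eq_self_iff, exists_reesMul_local_units hlu, image2_reesMul_reesComp g hlu,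
    ⟨smashToRees_injective g, range_smashToRees g, smashToRees_smashMul g⟩,
    forall_existsUnique_isInversePair_iff_reesMul⟩
end
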